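/- Let ABC be a triangle none of whose angles is a right angle, and let H be its orthocenter. Let (B_A, C_A) be a cevian pair from A with cevian intersection point N_A and Miquel–Steiner point M_A. Then M_A = H if and only if dist(B, B_A) = dist(B, C) and dist(C, C_A) = dist(B, C). -/

import Mathlib

open EuclideanGeometry

/-- `(B_A, C_A)` is a cevian pair from `A` in triangle `ABC`: `B_A` lies on line `AC`
with `B_A ∉ {A, C}`, `C_A` lies on line `AB` with `C_A ∉ {A, B}`, and the lines
`B B_A` and `C C_A` are not parallel. -/
def IsCevianPair (A B C B_A C_A : EuclideanSpace ℝ (Fin 2)) : Prop :=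
  B_A ∈ line[ℝ, A, C] ∧ B_A ≠ A ∧ B_A ≠ C ∧
  C_A ∈ line[ℝ, A, B] ∧ C_A ≠ A ∧ C_A ≠ B ∧
  ¬ AffineSubspace.Parallel (line[ℝ, B, B_A]) (line[ℝ, C, C_A])

/-- `M` is a Miquel–Steiner point of the cevian pair `(B_A, C_A)` from `A` with cevian
intersection point `N_A`: it lies on the circumcircles of the four triangles
`A B B_A`, `A C C_A`, `C B_A N_A`, `B C_A N_A`. -/
def IsMiquelPoint (A B C B_A C_A N_A M : EuclideanSpace ℝ (Fin 2)) : Prop :=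
  Cospherical ({A, B, B_A, M} : Set (EuclideanSpace ℝ (Fin 2))) ∧
  Cospherical ({A, C, C_A, M} : Set (EuclideanSpace ℝ (Fin 2))) ∧
  Cospherical ({C, B_A, N_A, M} : Set (EuclideanSpace ℝ (Fin 2))) ∧
  Cospherical ({B, C_A, N_A, M} : Set (EuclideanSpace ℝ (Fin 2)))

/-! Put the origin at `A`. A circle through `A` with centre `A + o` is `{A + x | ‖x‖² = 2⟪x, o⟫}`,
and `⟪x, o⟫` is determined by the inner products of `o` with `B - A` and `C - A` once `x` is
written in that basis. The orthocenter conditions fix `⟪H - A, B - A⟫ = ⟪H - A, C - A⟫ =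
⟪B - A, C - A⟫`, so a short computation shows that `H` lies on the circle `A B B_A` iff `B_A` is
the reflection of `C` in the foot of the altitude from `B`, i.e. iff `BB_A = BC`; likewise for
the circle `A C C_A`. These two circles differ and meet at `A` and at `M_A ≠ A`, because the
circle `C B_A N_A M_A` cannot pass through the collinear points `A, C, B_A`; in the plane they
have no third common point, so `M_A = H` iff `H` lies on both. -/

open InnerProductGeometry RealInnerProductSpace Module Real

section

variable {V : Type*} [NormedAddCommGroup V] [InnerProductSpace ℝ V]

theorem norm_sub_smul_eq_norm_sub_iff {u v : V} {t : ℝ} (ht : t ≠ 1) :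
    ‖u - t • v‖ = ‖u - v‖ ↔ (1 + t) * ‖v‖ ^ 2 = 2 * ⟪u, v⟫ := by
  have key : ‖u - t • v‖ ^ 2 - ‖u - v‖ ^ 2 = (t - 1) * ((1 + t) * ‖v‖ ^ 2 - 2 * ⟪u, v⟫) := by
    rw [norm_sub_sq_real, norm_sub_sq_real, norm_smul, inner_smul_right, mul_pow,
      Real.norm_eq_abs, sq_abs]
    ring
  rw [← sq_eq_sq₀ (norm_nonneg _) (norm_nonneg _), ← sub_eq_zero, key,
    mul_eq_zero, sub_eq_zero, sub_eq_zero, or_iff_right ht]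

theorem norm_sq_eq_two_inner_iff {u v z o : V} {α β t : ℝ} (hz : z = α • u + β • v)
    (hzu : ⟪z, u⟫ = ⟪u, v⟫) (hzv : ⟪z, v⟫ = ⟪u, v⟫) (huv : ⟪u, v⟫ ≠ 0) (huv_ne : ⟪u, v⟫ ≠ ‖u‖ ^ 2)
    (hu : ‖u‖ ^ 2 = 2 * ⟪u, o⟫) (hv : t * ‖v‖ ^ 2 = 2 * ⟪v, o⟫) :
    ‖z‖ ^ 2 = 2 * ⟪z, o⟫ ↔ (1 + t) * ‖v‖ ^ 2 = 2 * ⟪u, v⟫ := by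
  have hzz : ‖z‖ ^ 2 = (α + β) * ⟪u, v⟫ := by
    rw [← real_inner_self_eq_norm_sq]
    nth_rewrite 2 [hz]
    rw [inner_add_right, real_inner_smul_right, real_inner_smul_right, hzu, hzv]
    ring
  have hαβu : α * ‖u‖ ^ 2 + β * ⟪u, v⟫ = ⟪u, v⟫ := by
    rwa [hz, inner_add_left, real_inner_smul_left, real_inner_smul_left,
      real_inner_self_eq_norm_sq, real_inner_comm u v] at hzu
  have hαβv : α * ⟪u, v⟫ + β * ‖v‖ ^ 2 = ⟪u, v⟫ := by
    rwa [hz, inner_add_left, real_inner_smul_left, real_inner_smul_left,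
      real_inner_self_eq_norm_sq] at hzv
  have hzo : 2 * ⟪z, o⟫ = α * ‖u‖ ^ 2 + β * (t * ‖v‖ ^ 2) := by
    rw [hu, hv, hz, inner_add_left, real_inner_smul_left, real_inner_smul_left]
    ring
  have hβ : β ≠ 0 := by
    rintro rfl
    have hα : α = 1 := by
      apply mul_right_cancel₀ huv
      linear_combination hαβv
    exact huv_ne (by linear_combination -hαβu + ‖u‖ ^ 2 * hα)
  have key : ‖z‖ ^ 2 - 2 * ⟪z, o⟫ = β * (2 * ⟪u, v⟫ - (1 + t) * ‖v‖ ^ 2) := by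
    linear_combination hzz - hzo - hαβu + hαβv
  rw [← sub_eq_zero, key, mul_eq_zero, or_iff_right hβ, sub_eq_zero, eq_comm]

theorem AffineIndependent.exists_sub_eq_smul_add_smul [FiniteDimensional ℝ V]
    (hd : finrank ℝ V = 2) {A B C : V} (hABC : AffineIndependent ℝ ![A, B, C]) (X : V) :
    ∃ α β : ℝ, X - A = α • (B - A) + β • (C - A) := by
  have hspan := hABC.affineSpan_eq_top_iff_card_eq_finrank_add_one.mpr (by simp [hd])
  rw [Matrix.range_cons, Matrix.range_cons_cons_empty, Set.singleton_union] at hspan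
  have hX : X - A ∈ vectorSpan ℝ ({A, B, C} : Set V) := by
    rw [AffineSubspace.vectorSpan_eq_top_of_affineSpan_eq_top ℝ V V hspan]
    trivial
  rw [vectorSpan_eq_span_vsub_set_right ℝ (Set.mem_insert A _)] at hX
  simp only [Set.image_insert_eq, Set.image_singleton, vsub_eq_sub, sub_self,
    Submodule.span_insert_zero] at hX
  obtain ⟨α, β, h⟩ := Submodule.mem_span_pair.mp hX
  exact ⟨α, β, h.symm⟩

theorem mem_sphere_iff_norm_sq_eq_two_inner {s : Sphere V} {A X : V} (hA : A ∈ s) :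
    X ∈ s ↔ ‖X - A‖ ^ 2 = 2 * ⟪X - A, s.center - A⟫ := by
  rw [mem_sphere, ← mem_sphere.mp hA, dist_eq_norm, dist_eq_norm,
    ← sq_eq_sq₀ (norm_nonneg _) (norm_nonneg _), ← sub_sub_sub_cancel_right X s.center A,
    norm_sub_sq_real, ← norm_neg (A - s.center), neg_sub]
  constructor <;> intro h <;> linarith

theorem not_cospherical_of_mem_line {p₁ p₂ p : V} (hp : p ∈ line[ℝ, p₁, p₂]) (h₁₂ : p₁ ≠ p₂)
    (h₁ : p ≠ p₁) (h₂ : p ≠ p₂) : ¬ Cospherical ({p₁, p₂, p} : Set V) := fun hs =>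
  affineIndependent_iff_not_collinear_set.mp (hs.affineIndependent_of_ne h₁₂ h₁.symm h₂.symm)
    (by rw [Set.pair_comm, Set.insert_comm]; exact collinear_insert_of_mem_affineSpan_pair hp)

theorem inner_sub_sub_ne_zero_of_angle_ne_pi_div_two {A B C : V} (h : ∠ A B C ≠ π / 2) :
    ⟪A - B, C - B⟫ ≠ 0 :=
  fun h' => h ((inner_eq_zero_iff_angle_eq_pi_div_two _ _).mp h')

theorem orthocenter_mem_sphere_iff [FiniteDimensional ℝ V] (hd : finrank ℝ V = 2)
    {A B C H B' : V} {s : Sphere V} (hABC : AffineIndependent ℝ ![A, B, C])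
    (hA : ∠ B A C ≠ π / 2) (hB : ∠ A B C ≠ π / 2)
    (hHB : ⟪H - B, C - A⟫ = 0) (hHC : ⟪H - C, B - A⟫ = 0)
    (hB' : B' ∈ line[ℝ, A, C]) (hB'A : B' ≠ A) (hB'C : B' ≠ C)
    (hAs : A ∈ s) (hBs : B ∈ s) (hB's : B' ∈ s) :
    H ∈ s ↔ dist B B' = dist B C := by
  obtain ⟨t, rfl⟩ := mem_affineSpan_pair_iff_exists_lineMap_eq.mp hB'
  have ht0 : t ≠ 0 := by rintro rfl; exact hB'A (AffineMap.lineMap_apply_zero A C)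
  have ht1 : t ≠ 1 := by rintro rfl; exact hB'C (AffineMap.lineMap_apply_one A C)
  have hB'v : AffineMap.lineMap A C t - A = t • (C - A) := AffineMap.lineMap_vsub_left A C t
  obtain ⟨α, β, hz⟩ := hABC.exists_sub_eq_smul_add_smul hd H
  have hzu : ⟪H - A, B - A⟫ = ⟪B - A, C - A⟫ := by
    rw [← sub_add_sub_cancel H C A, inner_add_left, hHC, zero_add, real_inner_comm]
  have hzv : ⟪H - A, C - A⟫ = ⟪B - A, C - A⟫ := by
    rw [← sub_add_sub_cancel H B A, inner_add_left, hHB, zero_add]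
  have hinnerB : ⟪B - A, C - A⟫ ≠ ‖B - A‖ ^ 2 := by
    intro h
    apply inner_sub_sub_ne_zero_of_angle_ne_pi_div_two hB
    rw [← sub_sub_sub_cancel_right C B A, ← neg_sub B A, inner_neg_left, inner_sub_right,
      real_inner_self_eq_norm_sq, h, sub_self, neg_zero]
  have hu := (mem_sphere_iff_norm_sq_eq_two_inner hAs).mp hBs
  have hv : t * ‖C - A‖ ^ 2 = 2 * ⟪C - A, s.center - A⟫ := by
    have h := (mem_sphere_iff_norm_sq_eq_two_inner hAs).mp hB's
    rw [hB'v, norm_smul, real_inner_smul_left, mul_pow, Real.norm_eq_abs, sq_abs] at h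
    apply mul_left_cancel₀ ht0
    linear_combination h
  rw [mem_sphere_iff_norm_sq_eq_two_inner hAs, norm_sq_eq_two_inner_iff hz hzu hzv
      (inner_sub_sub_ne_zero_of_angle_ne_pi_div_two hA) hinnerB hu hv,
    dist_eq_norm, dist_eq_norm, ← sub_sub_sub_cancel_right B (AffineMap.lineMap A C t) A, hB'v,
    ← sub_sub_sub_cancel_right B C A, norm_sub_smul_eq_norm_sub_iff ht1]

end

theorem IsMiquelPoint.ne_vertex {A B C B_A C_A N_A M : EuclideanSpace ℝ (Fin 2)}
    (hM : IsMiquelPoint A B C B_A C_A N_A M) (hAC : A ≠ C) (hB_A : B_A ∈ line[ℝ, A, C])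
    (hB_AA : B_A ≠ A) (hB_AC : B_A ≠ C) : M ≠ A := by
  rintro rfl
  exact not_cospherical_of_mem_line hB_A hAC hB_AA hB_AC
    (hM.2.2.1.subset (by simp [Set.insert_subset_iff]))

theorem IsMiquelPoint.exists_spheres {A B C B_A C_A N_A M : EuclideanSpace ℝ (Fin 2)}
    (hM : IsMiquelPoint A B C B_A C_A N_A M) (hAC : A ≠ C) (hB_A : B_A ∈ line[ℝ, A, C])
    (hB_AA : B_A ≠ A) (hB_AC : B_A ≠ C) :
    ∃ s₁ s₂ : Sphere (EuclideanSpace ℝ (Fin 2)), s₁ ≠ s₂ ∧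
      (A ∈ s₁ ∧ B ∈ s₁ ∧ B_A ∈ s₁ ∧ M ∈ s₁) ∧ (A ∈ s₂ ∧ C ∈ s₂ ∧ C_A ∈ s₂ ∧ M ∈ s₂) := by
  obtain ⟨s₁, hs₁⟩ := cospherical_iff_exists_sphere.mp hM.1
  obtain ⟨s₂, hs₂⟩ := cospherical_iff_exists_sphere.mp hM.2.1
  simp only [Set.insert_subset_iff, Set.singleton_subset_iff, Sphere.mem_coe] at hs₁ hs₂
  refine ⟨s₁, s₂, ?_, hs₁, hs₂⟩
  rintro rfl
  refine not_cospherical_of_mem_line hB_A hAC hB_AA hB_AC (s₁.cospherical.subset ?_)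
  simp only [Set.insert_subset_iff, Set.singleton_subset_iff, Sphere.mem_coe]
  exact ⟨hs₁.1, hs₂.2.1, hs₁.2.2.1⟩

theorem miquel_point_eq_orthocenter_iff_general
    (A B C B_A C_A N_A M_A H : EuclideanSpace ℝ (Fin 2))
    (hABC : AffineIndependent ℝ ![A, B, C])
    (hang₁ : EuclideanGeometry.angle B A C ≠ Real.pi / 2)
    (hang₂ : EuclideanGeometry.angle A B C ≠ Real.pi / 2)
    (hang₃ : EuclideanGeometry.angle A C B ≠ Real.pi / 2)
    (hH₂ : (inner ℝ (H - B) (C - A) : ℝ) = 0)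
    (hH₃ : (inner ℝ (H - C) (B - A) : ℝ) = 0)
    (hcev : IsCevianPair A B C B_A C_A)
    (hM : IsMiquelPoint A B C B_A C_A N_A M_A) :
    M_A = H ↔ (dist B B_A = dist B C ∧ dist C C_A = dist B C) := by
  obtain ⟨hB_A, hB_AA, hB_AC, hC_A, hC_AA, hC_AB, -⟩ := hcev
  have hd : finrank ℝ (EuclideanSpace ℝ (Fin 2)) = 2 := finrank_euclideanSpace_fin
  have hAC : A ≠ C := hABC.injective.ne (by decide : (0 : Fin 3) ≠ 2)
  obtain ⟨s₁, s₂, hs, ⟨hAs₁, hBs₁, hB_As₁, hMs₁⟩, hAs₂, hCs₂, hC_As₂, hMs₂⟩ :=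
    hM.exists_spheres hAC hB_A hB_AA hB_AC
  have hHs₁ : H ∈ s₁ ↔ dist B B_A = dist B C :=
    orthocenter_mem_sphere_iff hd hABC hang₁ hang₂ hH₂ hH₃ hB_A hB_AA hB_AC hAs₁ hBs₁ hB_As₁
  have hHs₂ : H ∈ s₂ ↔ dist C C_A = dist B C := by
    rw [dist_comm B C]
    exact orthocenter_mem_sphere_iff hd hABC.comm_right (by rwa [EuclideanGeometry.angle_comm])
      hang₃ hH₃ hH₂ hC_A hC_AA hC_AB hAs₂ hCs₂ hC_As₂
  rw [← hHs₁, ← hHs₂]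
  constructor
  · rintro rfl
    exact ⟨hMs₁, hMs₂⟩
  · rintro ⟨h₁, h₂⟩
    have hHA : H ≠ A := by
      rintro rfl
      exact inner_sub_sub_ne_zero_of_angle_ne_pi_div_two hang₁
        (by rw [← neg_sub, inner_neg_left, hH₂, neg_zero])
    obtain hH | hH := eq_of_mem_sphere_of_mem_sphere_of_finrank_eq_two hd hs
      (hM.ne_vertex hAC hB_A hB_AA hB_AC).symm hAs₁ hMs₁ h₁ hAs₂ hMs₂ h₂
    · exact absurd hH hHA
    · exact hH.symm

/-- Suppose no angle of triangle `ABC` is a right angle and `H` is its orthocenter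
(the common point of the three altitudes). Then the Miquel–Steiner point `M_A` of a
cevian pair `(B_A, C_A)` from `A` equals `H` if and only if
`dist B B_A = dist B C` and `dist C C_A = dist B C`. -/
theorem miquel_point_eq_orthocenter_iff
    (A B C B_A C_A N_A M_A H : EuclideanSpace ℝ (Fin 2))
    (hABC : AffineIndependent ℝ ![A, B, C])
    (hang₁ : EuclideanGeometry.angle B A C ≠ Real.pi / 2)
    (hang₂ : EuclideanGeometry.angle A B C ≠ Real.pi / 2)
    (hang₃ : EuclideanGeometry.angle A C B ≠ Real.pi / 2)
    (hH₁ : (inner ℝ (H - A) (C - B) : ℝ) = 0)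
    (hH₂ : (inner ℝ (H - B) (C - A) : ℝ) = 0)
    (hH₃ : (inner ℝ (H - C) (B - A) : ℝ) = 0)
    (hcev : IsCevianPair A B C B_A C_A)
    (hN₁ : N_A ∈ line[ℝ, B, B_A]) (hN₂ : N_A ∈ line[ℝ, C, C_A])
    (hCBN : AffineIndependent ℝ ![C, B_A, N_A])
    (hBCN : AffineIndependent ℝ ![B, C_A, N_A])
    (hM : IsMiquelPoint A B C B_A C_A N_A M_A) :
    M_A = H ↔ (dist B B_A = dist B C ∧ dist C C_A = dist B C) :=
  miquel_point_eq_orthocenter_iff_general A B C B_A C_A N_A M_A H hABC hang₁ hang₂ hang₃ hH₂ hH₃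
    hcev hM
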